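/- Let H be a disjoint union of at least two paths, with longest and second longest components of orders n_1(H) and n_2(H). Then the longest cycle of K_2 + H has exactly n_1(H) + n_2(H) + 2 vertices; moreover K_2 + H contains a cycle of every length i with 3 \leq i \leq n_1(H) + n_2(H) + 2. -/

import Mathlib

open Set SimpleGraph

attribute [local instance] Classical.propDecidable

/-- A topological plane embedding of a simple graph: vertices are points in the
plane, edges are injective arcs meeting only at common endpoints. -/
structure PlaneEmbedding {V : Type*} (G : SimpleGraph V) where
  pos : V → ℝ × ℝ
  pos_inj : Function.Injective pos
  arc : ∀ {u v : V}, G.Adj u v → Path (pos u) (pos v)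
  arc_inj : ∀ {u v : V} (h : G.Adj u v), Function.Injective (arc h)
  arc_symm : ∀ {u v : V} (h : G.Adj u v),
    Set.range (arc h.symm) = Set.range (arc h)
  arc_avoid : ∀ {u v : V} (h : G.Adj u v) (w : V),
    pos w ∈ Set.range (arc h) → w = u ∨ w = v
  arc_meet : ∀ {u v a b : V} (h₁ : G.Adj u v) (h₂ : G.Adj a b),
    s(u, v) ≠ s(a, b) →
    Set.range (arc h₁) ∩ Set.range (arc h₂) ⊆
      ({pos u, pos v} : Set (ℝ × ℝ)) ∩ {pos a, pos b}

/-- The point set of the drawing. -/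
def PlaneEmbedding.image {V : Type*} {G : SimpleGraph V} (emb : PlaneEmbedding G) :
    Set (ℝ × ℝ) :=
  (⋃ (u : V) (v : V) (h : G.Adj u v), Set.range (emb.arc h)) ∪ Set.range emb.pos

/-- A graph is planar if it admits a plane embedding. -/
def SimpleGraph.IsPlanar {V : Type*} (G : SimpleGraph V) : Prop :=
  Nonempty (PlaneEmbedding G)

/-- A graph is outerplanar if it has a plane embedding with all vertices on the
boundary of the unbounded face. -/
def SimpleGraph.IsOuterplanar {V : Type*} (G : SimpleGraph V) : Prop :=
  ∃ emb : PlaneEmbedding G, ∃ U : Set (ℝ × ℝ),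
    U ⊆ emb.imageᶜ ∧ IsConnected U ∧ ¬ Bornology.IsBounded U ∧
    ∀ v : V, emb.pos v ∈ closure U

/-- The join `G + H` of two graphs. -/
def graphJoin {α β : Type*} (G : SimpleGraph α) (H : SimpleGraph β) :
    SimpleGraph (α ⊕ β) where
  Adj x y :=
    (∃ a b, x = Sum.inl a ∧ y = Sum.inl b ∧ G.Adj a b) ∨
    (∃ a b, x = Sum.inr a ∧ y = Sum.inr b ∧ H.Adj a b) ∨
    (x.isLeft ∧ y.isRight) ∨ (x.isRight ∧ y.isLeft)
  symm := by
    constructor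
    rintro x y (⟨a, b, rfl, rfl, h⟩ | ⟨a, b, rfl, rfl, h⟩ | ⟨h1, h2⟩ | ⟨h1, h2⟩)
    · exact Or.inl ⟨b, a, rfl, rfl, h.symm⟩
    · exact Or.inr (Or.inl ⟨b, a, rfl, rfl, h.symm⟩)
    · exact Or.inr (Or.inr (Or.inr ⟨h2, h1⟩))
    · exact Or.inr (Or.inr (Or.inl ⟨h2, h1⟩))
  loopless := by
    constructor
    rintro x (⟨a, b, rfl, h, hadj⟩ | ⟨a, b, rfl, h, hadj⟩ | ⟨h1, h2⟩ | ⟨h1, h2⟩)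
    · cases h; exact G.irrefl hadj
    · cases h; exact H.irrefl hadj
    · cases x <;> simp_all
    · cases x <;> simp_all

/-- Disjoint union of paths `P_{k 0} ∪ P_{k 1} ∪ ⋯`. -/
def pathsUnion {t : ℕ} (k : Fin t → ℕ) : SimpleGraph (Σ i : Fin t, Fin (k i)) where
  Adj x y := ∃ (i : Fin t) (a b : Fin (k i)),
    x = ⟨i, a⟩ ∧ y = ⟨i, b⟩ ∧ (pathGraph (k i)).Adj a b
  symm := by
    constructor
    rintro x y ⟨i, a, b, rfl, rfl, h⟩
    exact ⟨i, b, a, rfl, rfl, h.symm⟩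
  loopless := by
    constructor
    rintro x ⟨i, a, b, rfl, h2, hadj⟩
    obtain rfl : a = b := by simpa using h2
    exact (pathGraph (k i)).irrefl hadj

/-- `G` contains two vertex-disjoint cycles. -/
def HasTwoDisjointCycles {V : Type*} (G : SimpleGraph V) : Prop :=
  ∃ (a b : V) (c₁ : G.Walk a a) (c₂ : G.Walk b b),
    c₁.IsCycle ∧ c₂.IsCycle ∧ c₁.support.Disjoint c₂.support

/-- `G` contains two vertex-disjoint cycles of length `ℓ` each. -/
def HasTwoDisjointCyclesLen {V : Type*} (G : SimpleGraph V) (ℓ : ℕ) : Prop :=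
  ∃ (a b : V) (c₁ : G.Walk a a) (c₂ : G.Walk b b),
    c₁.IsCycle ∧ c₁.length = ℓ ∧ c₂.IsCycle ∧ c₂.length = ℓ ∧
    c₁.support.Disjoint c₂.support

/-- `G` contains a cycle of length `ℓ`. -/
def HasCycleLen {V : Type*} (G : SimpleGraph V) (ℓ : ℕ) : Prop :=
  ∃ (a : V) (c : G.Walk a a), c.IsCycle ∧ c.length = ℓ

/-- Combinatorial face structure on a plane graph: faces, incidence between
edges and faces (each edge on at least one and at most two faces), and face
sizes. -/
structure PlaneFaceStructure {V : Type*} (G : SimpleGraph V) where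
  F : Type
  fintypeF : Fintype F
  inc : Sym2 V → F → Prop
  inc_edge : ∀ e f, inc e f → e ∈ G.edgeSet
  face_exists : ∀ e ∈ G.edgeSet, ∃ f, inc e f
  le_two : ∀ e : Sym2 V, {f | inc e f}.ncard ≤ 2
  size : F → ℕ
  size_eq : ∀ f, size f = {e | inc e f}.ncard

/-!
A cycle of length `a + b + 2` runs from one vertex of `K₂` through the first `a ≥ 1` vertices
of the longest path to the other vertex of `K₂`, then through the first `b` vertices of the
second longest path and back (for `b = 0` it uses the edge of `K₂`); this gives every length
from `3` to `n₁ + n₂ + 2`. Conversely, consecutive `H`-vertices of a cycle lie on the same path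
of `H`, and every maximal run of `H`-vertices on a cycle through `K₂` is followed by a vertex of
`K₂`. So a cycle meets at most two paths of `H`, and has at most `2 + n₁ + n₂` vertices.
-/

open Sum

theorem hasCycleLen_of_isChain {V : Type*} {G : SimpleGraph V} {x : V} {l : List V}
    (hchain : (x :: l ++ [x]).IsChain G.Adj) (hnodup : (x :: l).Nodup) (hl : 2 ≤ l.length) :
    HasCycleLen G (l.length + 1) := by
  let p := Walk.ofSupport (x :: l ++ [x]) (List.cons_ne_nil _ _) hchain
  let c : G.Walk x x := p.copy rfl (List.getLast_append_singleton _)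
  have hsupp : c.support = x :: l ++ [x] :=
    (p.support_copy _ _).trans (Walk.support_ofSupport _ _)
  have hlen : c.length = l.length + 1 := by
    have := c.length_support
    rw [hsupp] at this
    simpa using this.symm
  refine ⟨x, c, Walk.isCycle_iff_isPath_tail_and_le_length.mpr ⟨?_, by omega⟩, hlen⟩
  rw [Walk.isPath_def, c.support_tail_of_not_nil (by simp [← Walk.length_eq_zero_iff, hlen]),
    hsupp]
  simpa using (List.perm_append_singleton x l).nodup_iff.mpr hnodup

namespace graphJoin

section

variable {α β : Type*} {G : SimpleGraph α} {H : SimpleGraph β}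

@[simp] lemma adj_inl_inl {a b : α} : (graphJoin G H).Adj (inl a) (inl b) ↔ G.Adj a b := by
  simp [graphJoin]

@[simp] lemma adj_inr_inr {a b : β} : (graphJoin G H).Adj (inr a) (inr b) ↔ H.Adj a b := by
  simp [graphJoin]

@[simp] lemma adj_inl_inr (a : α) (b : β) : (graphJoin G H).Adj (inl a) (inr b) := by
  simp [graphJoin]

@[simp] lemma adj_inr_inl (a : β) (b : α) : (graphJoin G H).Adj (inr a) (inl b) := by
  simp [graphJoin]

lemma isChain_inl_map_inr_inl {a b : α} {l : List β} (hl : l.IsChain H.Adj)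
    (hnil : l = [] → G.Adj a b) :
    (inl a :: l.map inr ++ [inl b]).IsChain (graphJoin G H).Adj := by
  rw [List.cons_append, List.isChain_cons, List.isChain_append, List.isChain_map]
  refine ⟨?_, by simpa using hl, List.isChain_singleton _, ?_⟩
  · cases l <;> simp_all
  · simp

theorem hasCycleLen_of_isChain_of_isChain {a b : α} (hab : G.Adj a b) {l₁ l₂ : List β}
    (h₁ : l₁.IsChain H.Adj) (h₂ : l₂.IsChain H.Adj) (hne : l₁ ≠ []) (hnodup : (l₁ ++ l₂).Nodup) :
    HasCycleLen (graphJoin G H) (l₁.length + l₂.length + 2) := by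
  have hchain := (isChain_inl_map_inr_inl (a := a) (b := b) h₁ (absurd · hne)).append_overlap
    (isChain_inl_map_inr_inl h₂ fun _ => hab.symm) (List.cons_ne_nil _ _)
  have hcycle := hasCycleLen_of_isChain (l := l₁.map inr ++ inl b :: l₂.map inr)
    (by simpa using hchain) ?_ ?_
  · simpa [add_assoc, add_comm 1] using hcycle
  · simpa [List.nodup_append, hab.ne, List.nodup_map_iff inr_injective] using hnodup
  · have := List.length_pos_iff.mpr hne
    simp only [List.length_append, List.length_map, List.length_cons]
    omega

variable {ι : Type*} {κ : β → ι}

/-- `J` gets one label per maximal run of `H`-vertices on `p`, and every run except one ending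
at `v` is followed by a `G`-vertex. -/
theorem exists_labels_of_walk (hκ : ∀ x y, H.Adj x y → κ x = κ y) {u v : α ⊕ β}
    (p : (graphJoin G H).Walk u v) :
    ∃ J : Finset ι, (∀ w, inr w ∈ p.support → κ w ∈ J) ∧
      J.card + u.isLeft.toNat ≤ (p.support.filterMap getLeft?).length + v.isRight.toNat := by
  induction p with
  | nil =>
    rename_i u
    rcases u with a | b
    · exact ⟨∅, by simp⟩
    · exact ⟨{κ b}, by simp⟩
  | cons h p ih =>
    rename_i u w v
    obtain ⟨J, hJ, hcard⟩ := ih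
    rcases u with a | x
    · refine ⟨J, by simpa using hJ, ?_⟩
      have := w.isLeft.toNat.zero_le
      simp only [Walk.support_cons, List.filterMap_cons, getLeft?_inl, List.length_cons,
        isLeft_inl, Bool.toNat_true]
      omega
    rcases w with b | y
    · refine ⟨insert (κ x) J, by simpa using fun w hw => Or.inr (hJ w hw), ?_⟩
      have := J.card_insert_le (κ x)
      simp only [Walk.support_cons, List.filterMap_cons, getLeft?_inr, isLeft_inr,
        Bool.toNat_false, isLeft_inl, Bool.toNat_true] at hcard ⊢
      omega
    · have hxy : κ x = κ y := hκ x y (adj_inr_inr.mp h)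
      refine ⟨J, ?_, by simpa [List.filterMap_cons] using hcard⟩
      simpa [hxy] using ⟨hJ y p.start_mem_support, hJ⟩

theorem exists_labels_of_isCycle [Fintype α] (hκ : ∀ x y, H.Adj x y → κ x = κ y) {v : α ⊕ β}
    {c : (graphJoin G H).Walk v v} (hc : c.IsCycle) :
    ∃ J : Finset ι, J.card ≤ max 1 (Fintype.card α) ∧ ∀ w, inr w ∈ c.support → κ w ∈ J := by
  have based : ∀ {u} {c : (graphJoin G H).Walk u u}, c.IsCycle →
      ∃ J : Finset ι, (∀ w, inr w ∈ c.support → κ w ∈ J) ∧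
        J.card ≤ (c.support.tail.filterMap getLeft?).length + u.isRight.toNat := by
    intro u c hc
    obtain ⟨J, hJ, hcard⟩ := exists_labels_of_walk hκ c.tail
    rw [c.support_tail_of_not_nil hc.not_nil] at hJ hcard
    refine ⟨J, fun w hw => hJ w ?_, by omega⟩
    rcases c.mem_support_iff.mp hw with rfl | hw
    · exact c.end_mem_tail_support hc.not_nil
    · exact hw
  by_cases hleft : ∃ z, inl z ∈ c.support
  · obtain ⟨z, hz⟩ := hleft
    obtain ⟨J, hJ, hcard⟩ := based (hc.rotate hz)
    have hnodup := (hc.rotate hz).support_nodup.filterMap (f := getLeft?) (by simp)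
    refine ⟨J, ?_, fun w hw => hJ w ((c.mem_support_rotate_iff _ hz).mpr hw)⟩
    have := hnodup.length_le_card
    simp only [isRight_inl, Bool.toNat_false] at hcard
    omega
  · obtain ⟨J, hJ, hcard⟩ := based hc
    refine ⟨J, ?_, hJ⟩
    have hnil : c.support.tail.filterMap getLeft? = [] := by
      refine List.filterMap_eq_nil_iff.mpr fun w hw => ?_
      rcases w with z | _
      · exact absurd ⟨z, List.mem_of_mem_tail hw⟩ hleft
      · rfl
    have := v.isRight.toNat_le
    rw [hnil, List.length_nil] at hcard
    omega

end

variable {α ι : Type*} {β : ι → Type*} {G : SimpleGraph α} {H : SimpleGraph (Σ i, β i)}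

theorem exists_length_le_of_isCycle [Fintype α] [∀ i, Fintype (β i)]
    (hH : ∀ x y, H.Adj x y → x.1 = y.1) {v : α ⊕ Σ i, β i} {c : (graphJoin G H).Walk v v}
    (hc : c.IsCycle) : ∃ J : Finset ι, J.card ≤ max 1 (Fintype.card α) ∧
      c.length ≤ Fintype.card α + ∑ j ∈ J, Fintype.card (β j) := by
  obtain ⟨J, hJ, hlabels⟩ := exists_labels_of_isCycle hH hc
  refine ⟨J, hJ, ?_⟩
  have hsub : c.support.tail.toFinset ⊆ Finset.univ.disjSum (J.sigma fun _ => Finset.univ) := by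
    intro w hw
    rcases w with a | x
    · simp
    · simpa using hlabels x (List.mem_of_mem_tail (List.mem_toFinset.mp hw))
  calc c.length = c.support.tail.toFinset.card := by
        rw [List.toFinset_card_of_nodup hc.support_nodup, List.length_tail, Walk.length_support]
        rfl
    _ ≤ _ := Finset.card_le_card hsub
    _ = _ := by simp [Finset.card_sigma]

end graphJoin
namespace pathsUnion

variable {t : ℕ} {k : Fin t → ℕ}

lemma fst_eq_of_adj {x y : Σ i, Fin (k i)} (h : (pathsUnion k).Adj x y) : x.1 = y.1 := by
  obtain ⟨i, a, b, rfl, rfl, -⟩ := h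
  rfl

def segment (k : Fin t → ℕ) (i : Fin t) {a : ℕ} (ha : a ≤ k i) : List (Σ i, Fin (k i)) :=
  List.ofFn fun j : Fin a => ⟨i, Fin.castLE ha j⟩

variable {i : Fin t} {a : ℕ} (ha : a ≤ k i)

lemma length_segment : (segment k i ha).length = a := List.length_ofFn

lemma isChain_segment : (segment k i ha).IsChain (pathsUnion k).Adj :=
  List.isChain_ofFn.mpr fun _ _ => ⟨i, _, _, rfl, rfl, pathGraph_adj.mpr (Or.inl rfl)⟩

lemma nodup_segment : (segment k i ha).Nodup :=
  List.nodup_ofFn.mpr fun _ _ h => Fin.castLE_injective ha (eq_of_heq (Sigma.mk.inj h).2)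

lemma fst_of_mem_segment {x : Σ i, Fin (k i)} (hx : x ∈ segment k i ha) : x.1 = i := by
  obtain ⟨j, rfl⟩ := List.mem_ofFn.mp hx
  rfl

end pathsUnion

theorem hasCycleLen_graphJoin_pathsUnion {α : Type*} {G : SimpleGraph α} {t : ℕ} {k : Fin t → ℕ}
    {z z' : α} (hzz : G.Adj z z') {i j : Fin t} (hij : i ≠ j) {a b : ℕ} (ha₀ : 1 ≤ a)
    (ha : a ≤ k i) (hb : b ≤ k j) : HasCycleLen (graphJoin G (pathsUnion k)) (a + b + 2) := by
  have hcycle := graphJoin.hasCycleLen_of_isChain_of_isChain hzz (pathsUnion.isChain_segment ha)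
    (pathsUnion.isChain_segment hb) ?_ ?_
  · rwa [pathsUnion.length_segment, pathsUnion.length_segment] at hcycle
  · exact List.ne_nil_of_length_pos (by rw [pathsUnion.length_segment]; omega)
  · refine List.nodup_append.mpr ⟨pathsUnion.nodup_segment ha, pathsUnion.nodup_segment hb, ?_⟩
    rintro x hx y hy rfl
    exact hij ((pathsUnion.fst_of_mem_segment ha hx).symm.trans
      (pathsUnion.fst_of_mem_segment hb hy))

theorem Antitone.sum_le_of_card_le_two {t : ℕ} {k : Fin t → ℕ} (hk : Antitone k) (ht : 2 ≤ t)
    {J : Finset (Fin t)} (hJ : J.card ≤ 2) :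
    ∑ j ∈ J, k j ≤ k ⟨0, by omega⟩ + k ⟨1, by omega⟩ := by
  have h₀ : ∀ a, k a ≤ k ⟨0, by omega⟩ := fun a => hk (Nat.zero_le a.val)
  have h₀₁ : ∀ a b : Fin t, a < b → k a + k b ≤ k ⟨0, by omega⟩ + k ⟨1, by omega⟩ :=
    fun a b hab => add_le_add (h₀ a) (hk (show 1 ≤ b.val by omega))
  interval_cases hcard : J.card
  · simp [Finset.card_eq_zero.mp hcard]
  · obtain ⟨a, rfl⟩ := Finset.card_eq_one.mp hcard
    simpa using (h₀ a).trans (Nat.le_add_right _ _)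
  · obtain ⟨a, b, hab, rfl⟩ := Finset.card_eq_two.mp hcard
    rw [Finset.sum_pair hab]
    rcases hab.lt_or_gt with hab | hab
    · exact h₀₁ a b hab
    · exact add_comm (k a) (k b) ▸ h₀₁ b a hab

/-- For `H` a disjoint union of at least two paths with longest components of
orders `n₁ ≥ n₂`: `K₂ + H` contains a cycle of every length `3 ≤ i ≤ n₁ + n₂ + 2`,
and its longest cycle has exactly `n₁ + n₂ + 2` vertices. -/
theorem join_longest_cycle (t : ℕ) (ht : 2 ≤ t) (k : Fin t → ℕ)
    (hk1 : ∀ i, 1 ≤ k i) (hanti : ∀ i j : Fin t, i ≤ j → k j ≤ k i)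
    (n₁ n₂ : ℕ) (h₁ : n₁ = k ⟨0, by omega⟩) (h₂ : n₂ = k ⟨1, by omega⟩) :
    (∀ i : ℕ, 3 ≤ i → i ≤ n₁ + n₂ + 2 →
      HasCycleLen (graphJoin (⊤ : SimpleGraph (Fin 2)) (pathsUnion k)) i) ∧
    IsGreatest {m : ℕ |
      HasCycleLen (graphJoin (⊤ : SimpleGraph (Fin 2)) (pathsUnion k)) m}
      (n₁ + n₂ + 2) := by
  have hk : Antitone k := hanti
  have hn₁ : 1 ≤ n₁ := h₁ ▸ hk1 _
  have hcycle : ∀ i, 3 ≤ i → i ≤ n₁ + n₂ + 2 →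
      HasCycleLen (graphJoin (⊤ : SimpleGraph (Fin 2)) (pathsUnion k)) i := by
    intro i hi₃ hi
    obtain ⟨a, b, ha₀, ha, hb, rfl⟩ : ∃ a b, 1 ≤ a ∧ a ≤ n₁ ∧ b ≤ n₂ ∧ i = a + b + 2 :=
      ⟨min (i - 2) n₁, i - 2 - min (i - 2) n₁, by omega, by omega, by omega, by omega⟩
    exact hasCycleLen_graphJoin_pathsUnion ((top_adj 0 1).mpr (by decide))
      (Fin.ne_of_val_ne zero_ne_one) ha₀ (h₁ ▸ ha) (h₂ ▸ hb)
  refine ⟨hcycle, hcycle _ (by omega) le_rfl, ?_⟩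
  rintro m ⟨v, c, hc, rfl⟩
  obtain ⟨J, hJ, hlen⟩ :=
    graphJoin.exists_length_le_of_isCycle (fun _ _ => pathsUnion.fst_eq_of_adj) hc
  have := hk.sum_le_of_card_le_two ht (J := J) (by simpa using hJ)
  simp only [Fintype.card_fin] at hlen
  omega
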